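/- arXiv:1402.3246 — 6 statements merged into one kernel-verified Lean document; each statement's English description precedes it below -/
import Mathlib

section
/- Let f = Σ_{j=0}^d f_j x^j be a polynomial over a field with f_0 ≠ 0. Then for all n ≥ 0 and all k ≠ 0 (as an element of the field), k · f_0 · f^n_k = Σ_{j=1}^d (nj - k + j) · f_j · f^n_{k-j}, expressing f^n_k in terms of the d consecutive coefficients to its left. -/
open Polynomial Finset

/-- Coefficient of a polynomial at an integer index, zero for negative indices. -/
noncomputable def coeffZ {F : Type*} [Semiring F] (g : Polynomial F) (k : ℤ) : F :=
  if 0 ≤ k then g.coeff k.toNat else 0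

lemma coeffZ_neg {F : Type*} [Semiring F] (g : Polynomial F) {k : ℤ} (h : k < 0) :
    coeffZ g k = 0 := by simp [coeffZ, not_le.2 h]

lemma coeffZ_natCast {F : Type*} [Semiring F] (g : Polynomial F) (m : ℕ) :
    coeffZ g (m : ℤ) = g.coeff m := by simp [coeffZ]

lemma coeffZ_derivative {F : Type*} [CommRing F] (g : Polynomial F) (m : ℤ) :
    coeffZ (derivative g) m = ((m + 1 : ℤ) : F) * coeffZ g (m + 1) := by
  rcases le_or_gt 0 m with h | h
  · have h1 : (0:ℤ) ≤ m + 1 := by omega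
    have h2 : (m + 1).toNat = m.toNat + 1 := by omega
    simp only [coeffZ, if_pos h, if_pos h1, h2, Polynomial.coeff_derivative]
    have h4 : (m.toNat : ℤ) = m := Int.toNat_of_nonneg h
    have h3 : ((m + 1 : ℤ) : F) = ((m.toNat + 1 : ℕ) : F) := by
      rw [← h4]; push_cast [Int.toNat_natCast]; ring
    rw [h3]; push_cast; ring
  · rw [coeffZ_neg (derivative g) h]
    rcases eq_or_lt_of_le (by omega : m + 1 ≤ 0) with h1 | h1
    · rw [h1]; simp
    · rw [coeffZ_neg g h1, mul_zero]

lemma coeff_mul_eq_sum {F : Type*} [CommRing F] (p q : Polynomial F) (d k : ℕ)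
    (hp : p.natDegree ≤ d) (hk : 1 ≤ k) :
    (p * q).coeff (k - 1) =
      ∑ j ∈ range (d + 1), p.coeff j * coeffZ q ((k : ℤ) - 1 - j) := by
  have hM1 : range k ⊆ range (max k (d + 1)) := range_subset_range.2 (le_max_left _ _)
  have hM2 : range (d + 1) ⊆ range (max k (d + 1)) := range_subset_range.2 (le_max_right _ _)
  have e1 : (p * q).coeff (k - 1) =
      ∑ j ∈ range k, p.coeff j * coeffZ q ((k : ℤ) - 1 - j) := by
    rw [Polynomial.coeff_mul, Finset.Nat.sum_antidiagonal_eq_sum_range_succ_mk]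
    rw [show (k - 1).succ = k from by omega]
    refine Finset.sum_congr rfl fun j hj => ?_
    have hj' : j < k := mem_range.1 hj
    have harg : ((k : ℤ) - 1 - j) = ((k - 1 - j : ℕ) : ℤ) := by omega
    rw [harg, coeffZ_natCast]
  rw [e1]
  rw [Finset.sum_subset hM1 (fun x _ hx' => by
    have hx : k ≤ x := by
      by_contra hc
      exact hx' (mem_range.2 (by omega))
    rw [coeffZ_neg q (by omega : (k : ℤ) - 1 - x < 0), mul_zero])]
  rw [Finset.sum_subset hM2 (fun x _ hx' => by
    have hx : d + 1 ≤ x := by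
      by_contra hc
      exact hx' (mem_range.2 (by omega))
    rw [Polynomial.coeff_eq_zero_of_natDegree_lt (lt_of_le_of_lt hp (by omega)), zero_mul])]

lemma mul_derivative_pow {F : Type*} [CommRing F] (f : Polynomial F) (n : ℕ) :
    f * derivative (f ^ n) = C (n : F) * (derivative f * f ^ n) := by
  cases n with
  | zero => simp
  | succ m =>
    rw [Polynomial.derivative_pow]
    have h1 : m + 1 - 1 = m := rfl
    rw [h1, pow_succ]
    ring

/-- Leftward recurrence: k f₀ fⁿ_k = Σ_{j=1}^d (nj - k + j) f_j fⁿ_{k-j}, for k ≠ 0 in the field. -/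
theorem coeff_pow_left_recurrence {F : Type*} [Field F] (f : Polynomial F) (d : ℕ)
    (hd : f.natDegree ≤ d) (h0 : f.coeff 0 ≠ 0) (n k : ℕ) (hk : (k : F) ≠ 0) :
    (k : F) * f.coeff 0 * coeffZ (f ^ n) (k : ℤ) =
      ∑ j ∈ Finset.Icc 1 d,
        (((n : ℤ) * j - (k : ℤ) + (j : ℤ) : ℤ) : F) * f.coeff j *
          coeffZ (f ^ n) ((k : ℤ) - (j : ℤ)) := by
  have hk0 : k ≠ 0 := fun h => hk (by simp [h])
  have hk1 : 1 ≤ k := Nat.one_le_iff_ne_zero.2 hk0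
  have hdf : (derivative f).natDegree ≤ d :=
    le_trans (Polynomial.natDegree_derivative_le f) (le_trans (Nat.sub_le _ _) hd)
  have key := congrArg (fun p : Polynomial F => p.coeff (k - 1)) (mul_derivative_pow f n)
  simp only [Polynomial.coeff_C_mul] at key
  rw [coeff_mul_eq_sum f (derivative (f ^ n)) d k hd hk1,
      coeff_mul_eq_sum (derivative f) (f ^ n) d k hdf hk1] at key
  have eL : ∑ j ∈ range (d + 1), f.coeff j * coeffZ (derivative (f ^ n)) ((k : ℤ) - 1 - j)
      = ∑ j ∈ range (d + 1),
          (((k : ℤ) - j : ℤ) : F) * f.coeff j * coeffZ (f ^ n) ((k : ℤ) - j) := by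
    refine Finset.sum_congr rfl fun j _ => ?_
    rw [coeffZ_derivative]
    have h1 : (k : ℤ) - 1 - j + 1 = (k : ℤ) - j := by ring
    rw [h1]; ring
  have eR : ∑ j ∈ range (d + 1), (derivative f).coeff j * coeffZ (f ^ n) ((k : ℤ) - 1 - j)
      = ∑ j ∈ range (d + 1),
          ((j + 1 : ℕ) : F) * f.coeff (j + 1) * coeffZ (f ^ n) ((k : ℤ) - (j + 1)) := by
    refine Finset.sum_congr rfl fun j _ => ?_
    rw [Polynomial.coeff_derivative]
    have h1 : (k : ℤ) - 1 - j = (k : ℤ) - ((j : ℤ) + 1) := by ring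
    rw [h1]
    push_cast
    ring
  rw [eL, eR] at key
  rw [Finset.sum_range_succ' (fun j => (((k : ℤ) - j : ℤ) : F) * f.coeff j *
        coeffZ (f ^ n) ((k : ℤ) - j)) d] at key
  rw [Finset.sum_range_succ (fun j => ((j + 1 : ℕ) : F) * f.coeff (j + 1) *
        coeffZ (f ^ n) ((k : ℤ) - (j + 1))) d] at key
  have hfd1 : f.coeff (d + 1) = 0 :=
    Polynomial.coeff_eq_zero_of_natDegree_lt (lt_of_le_of_lt hd (by omega))
  rw [hfd1] at key
  simp only [Nat.cast_zero, sub_zero, mul_zero, zero_mul, add_zero, mul_add] at key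
  -- key : ∑_{j∈range d} G(j+1) + (k) f_0 Z k = n * ∑_{j∈range d} H j
  have target : ∑ j ∈ Finset.Icc 1 d,
        (((n : ℤ) * j - (k : ℤ) + (j : ℤ) : ℤ) : F) * f.coeff j *
          coeffZ (f ^ n) ((k : ℤ) - (j : ℤ))
      = ∑ i ∈ range d,
        (((n : ℤ) * (1 + i) - (k : ℤ) + ((1 + i : ℕ) : ℤ) : ℤ) : F) * f.coeff (1 + i) *
          coeffZ (f ^ n) ((k : ℤ) - ((1 + i : ℕ) : ℤ)) := by
    rw [← Finset.Ico_add_one_right_eq_Icc, Finset.sum_Ico_eq_sum_range]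
    simp only [Nat.add_sub_cancel, Nat.succ_sub_one]
    refine Finset.sum_congr rfl fun i _ => ?_
    push_cast
    ring_nf
  rw [target]
  have step : ∀ i ∈ range d,
      (((n : ℤ) * (1 + i) - (k : ℤ) + ((1 + i : ℕ) : ℤ) : ℤ) : F) * f.coeff (1 + i) *
          coeffZ (f ^ n) ((k : ℤ) - ((1 + i : ℕ) : ℤ))
      = (n : F) * (((i + 1 : ℕ) : F) * f.coeff (i + 1) *
            coeffZ (f ^ n) ((k : ℤ) - ((i : ℤ) + 1)))
        - (((k : ℤ) - ((i : ℕ) + 1 : ℕ) : ℤ) : F) * f.coeff ((i : ℕ) + 1) *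
            coeffZ (f ^ n) ((k : ℤ) - ((i : ℕ) + 1 : ℕ)) := by
    intro i _
    have harg1 : (k : ℤ) - ((1 + i : ℕ) : ℤ) = (k : ℤ) - ((i : ℤ) + 1) := by push_cast; ring
    have harg2 : (k : ℤ) - (((i : ℕ) + 1 : ℕ) : ℤ) = (k : ℤ) - ((i : ℤ) + 1) := by
      push_cast; ring
    have harg3 : (1 + i : ℕ) = i + 1 := by omega
    rw [harg1, harg2, harg3]
    push_cast
    ring
  rw [Finset.sum_congr rfl step, Finset.sum_sub_distrib]
  rw [← Finset.mul_sum]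
  have hcast : (((k : ℕ) : ℤ) : F) = (k : F) := by push_cast; ring
  rw [hcast] at key
  linear_combination key
end

section
/- Let f = Σ_{j=0}^d f_j x^j be a polynomial over a field with f_d ≠ 0. Then for all n ≥ 0 and all k with nd - k ≠ 0 in the field, (nd - k) · f_d · f^n_k = -Σ_{j=1}^d (n(d-j) - k - j) · f_{d-j} · f^n_{k+j}, expressing f^n_k in terms of the d consecutive coefficients to its right. -/
open Polynomial Finset

private lemma coeff_mul_range {F : Type*} [Field F] (p q : Polynomial F) (K : ℕ) :
    (p * q).coeff K = ∑ i ∈ Finset.range (K + 1), p.coeff i * q.coeff (K - i) := by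
  rw [coeff_mul, Finset.Nat.sum_antidiagonal_eq_sum_range_succ_mk]

private lemma key {F : Type*} [Field F] (f : Polynomial F) (n K : ℕ) :
    ∑ i ∈ Finset.range (K + 1), ((n : F) + 1) * i * f.coeff i * (f ^ n).coeff (K - i)
      = (K : F) * (f ^ (n + 1)).coeff K := by
  cases K with
  | zero => simp
  | succ m =>
    have h2 : derivative (f ^ (n + 1)) = C (((n : F)) + 1) * (derivative f * f ^ n) := by
      rw [derivative_pow]
      push_cast
      ring
    have h1 : (f ^ (n + 1)).coeff (m + 1) * ((m : F) + 1)
        = ((n : F) + 1) * ∑ a ∈ Finset.range (m + 1),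
            (f.coeff (a + 1) * ((a : F) + 1)) * (f ^ n).coeff (m - a) := by
      have := coeff_derivative (f ^ (n + 1)) m
      rw [h2, coeff_C_mul, coeff_mul_range] at this
      rw [← this]
      congr 1
      refine Finset.sum_congr rfl fun a _ => ?_
      rw [coeff_derivative]
    rw [Finset.sum_range_succ']
    push_cast
    have h3 : ∀ a ∈ Finset.range (m + 1),
        ((n : F) + 1) * ((a : F) + 1) * f.coeff (a + 1) * (f ^ n).coeff (m - a)
          = ((n : F) + 1) * ((f.coeff (a + 1) * ((a : F) + 1)) * (f ^ n).coeff (m - a)) := by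
      intro a _
      ring
    rw [Finset.sum_congr rfl h3, ← Finset.mul_sum, ← h1]
    ring

/-- Rightward recurrence: (nd - k) f_d fⁿ_k = -Σ_{j=1}^d (n(d-j) - k - j) f_{d-j} fⁿ_{k+j},
for nd - k ≠ 0 in the field. -/
theorem coeff_pow_right_recurrence {F : Type*} [Field F] (f : Polynomial F) (d : ℕ)
    (hd : f.natDegree ≤ d) (hfd : f.coeff d ≠ 0) (n k : ℕ)
    (hk : (((n : ℤ) * d - (k : ℤ) : ℤ) : F) ≠ 0) :
    (((n : ℤ) * d - (k : ℤ) : ℤ) : F) * f.coeff d * coeffZ (f ^ n) (k : ℤ) =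
      -∑ j ∈ Finset.Icc 1 d,
        (((n : ℤ) * ((d : ℤ) - j) - (k : ℤ) - (j : ℤ) : ℤ) : F) * f.coeff (d - j) *
          coeffZ (f ^ n) ((k : ℤ) + (j : ℤ)) := by
  have hz : ∀ i, d < i → f.coeff i = 0 := fun i hi =>
    coeff_eq_zero_of_natDegree_lt (lt_of_le_of_lt hd hi)
  have hsub : Finset.range (d + 1) ⊆ Finset.range (k + d + 1) := by
    intro i hi; simp only [Finset.mem_range] at *; omega
  have hA : ∑ i ∈ Finset.range (d + 1), ((n : F) + 1) * i * f.coeff i * (f ^ n).coeff (k + d - i)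
      = ((k + d : ℕ) : F) * (f ^ (n + 1)).coeff (k + d) := by
    rw [← key f n (k + d)]
    apply Finset.sum_subset hsub
    intro i _ hni
    simp only [Finset.mem_range, not_lt] at hni
    rw [hz i (by omega)]
    ring
  have hB : (f ^ (n + 1)).coeff (k + d)
      = ∑ i ∈ Finset.range (d + 1), f.coeff i * (f ^ n).coeff (k + d - i) := by
    rw [pow_succ', coeff_mul_range]
    symm
    apply Finset.sum_subset hsub
    intro i _ hni
    simp only [Finset.mem_range, not_lt] at hni
    rw [hz i (by omega)]
    ring
  have hC : ∑ i ∈ Finset.range (d + 1),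
      (((n : F) + 1) * i - ((k + d : ℕ) : F)) * f.coeff i * (f ^ n).coeff (k + d - i) = 0 := by
    have hexp : ∀ i ∈ Finset.range (d + 1),
        (((n : F) + 1) * i - ((k + d : ℕ) : F)) * f.coeff i * (f ^ n).coeff (k + d - i)
          = ((n : F) + 1) * i * f.coeff i * (f ^ n).coeff (k + d - i)
            - ((k + d : ℕ) : F) * (f.coeff i * (f ^ n).coeff (k + d - i)) := fun i _ => by ring
    rw [Finset.sum_congr rfl hexp, Finset.sum_sub_distrib, hA, ← Finset.mul_sum, ← hB, sub_self]
  have hD : ∑ j ∈ Finset.range (d + 1),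
      (((n : F) + 1) * ((d : F) - j) - ((k + d : ℕ) : F)) * f.coeff (d - j)
        * (f ^ n).coeff (k + j) = 0 := by
    rw [← hC, ← Finset.sum_range_reflect]
    apply Finset.sum_congr rfl
    intro j hj
    simp only [Finset.mem_range] at hj
    have hj' : j ≤ d := by omega
    simp only [Nat.add_sub_cancel]
    have e1 : d - (d - j) = j := by omega
    have e2 : k + (d - j) = k + d - j := by omega
    rw [e1, e2, Nat.cast_sub hj']
    ring
  rw [Finset.sum_range_succ'] at hD
  have hcz0 : coeffZ (f ^ n) (k : ℤ) = (f ^ n).coeff k := by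
    unfold coeffZ
    rw [if_pos (Int.natCast_nonneg k)]
    simp
  have hIcc : (∑ j ∈ Finset.Icc 1 d,
        (((n : ℤ) * ((d : ℤ) - j) - (k : ℤ) - (j : ℤ) : ℤ) : F) * f.coeff (d - j) *
          coeffZ (f ^ n) ((k : ℤ) + (j : ℤ)))
      = ∑ i ∈ Finset.range d,
          (((n : F) + 1) * ((d : F) - ((i + 1 : ℕ) : F)) - ((k + d : ℕ) : F))
            * f.coeff (d - (i + 1)) * (f ^ n).coeff (k + (i + 1)) := by
    rw [← Finset.Ico_add_one_right_eq_Icc, Finset.sum_Ico_eq_sum_range]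
    apply Finset.sum_congr (by congr 1)
    intro i _
    have hcz : coeffZ (f ^ n) ((k : ℤ) + ((1 + i : ℕ) : ℤ)) = (f ^ n).coeff (k + (i + 1)) := by
      unfold coeffZ
      rw [if_pos (by positivity)]
      congr 1
      omega
    have hidx : d - (1 + i) = d - (i + 1) := by omega
    rw [hcz, hidx]
    push_cast
    ring
  rw [hcz0, hIcc]
  have hG0 : (((n : ℤ) * d - k : ℤ) : F) * f.coeff d * (f ^ n).coeff k
      = (((n : F) + 1) * ((d : F) - ((0 : ℕ) : F)) - ((k + d : ℕ) : F)) * f.coeff (d - 0)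
        * (f ^ n).coeff (k + 0) := by
    simp only [Nat.sub_zero, Nat.add_zero]
    push_cast
    ring
  rw [hG0]
  linear_combination hD
end

section
/- Let b = 2^ℓ, let A_0, …, A_{b-1} be r×r matrices over ℤ with A_{b-1} the identity, V an integer row vector of length r, and m_0, …, m_{b-1} positive integers with m_0 = 1. Define for 0 ≤ i ≤ ℓ and 0 ≤ j < 2^i: m_{i,j} = Π_{u=j·2^{ℓ-i}}^{(j+1)·2^{ℓ-i}-1} m_u, A_{i,j} = Π_{u=j·2^{ℓ-i}}^{(j+1)·2^{ℓ-i}-1} A_u, and C_{i,j} = V · A_{i,0} ⋯ A_{i,j-1} mod m_{i,j}. Then the recursions m_{i,j} = m_{i+1,2j} · m_{i+1,2j+1}, A_{i,j} = A_{i+1,2j} · A_{i+1,2j+1}, and C_{i+1,j} = C_{i,⌊j/2⌋} mod m_{i+1,j} for j even, C_{i+1,j} = C_{i,⌊j/2⌋} · A_{i+1,j-1} mod m_{i+1,j} for j odd, hold; in particular the RemainderTree algorithm correctly computes C_j = V A_0 ⋯ A_{j-1} mod m_j for all 0 ≤ j < b. -/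
open Matrix Finset

/-- Componentwise reduction of an integer vector modulo a positive integer. -/
def vmod {r : ℕ} (w : Fin r → ℤ) (M : ℕ) : Fin r → ℤ := fun i => w i % (M : ℤ)

/-- Ordered product A_a · A_{a+1} ⋯ A_{b-1} of a sequence of matrices. -/
def prodA {r : ℕ} (A : ℕ → Matrix (Fin r) (Fin r) ℤ) (a b : ℕ) :
    Matrix (Fin r) (Fin r) ℤ :=
  ((List.range' a (b - a)).map A).prod

/-!
A node (i, j) of the tree covers the block of leaves `[j·2^(ℓ-i), (j+1)·2^(ℓ-i))`, the union of
the blocks of its children (i+1, 2j) and (i+1, 2j+1). Hence m_{i,j} and A_{i,j} split as products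
over the children, and m_{i+1,j'} divides m_{i,⌊j'/2⌋}. Reducing C_{i,⌊j'/2⌋} modulo this factor
gives C_{i+1,j'} directly when j' is even; when j' is odd, the prefix of the parent stops one
sibling block short, so it is first extended by the sibling's product A_{i+1,j'-1}, which is
harmless since reduction modulo m_{i,⌊j'/2⌋} commutes with multiplication.
-/

section Dyadic

variable {r : ℕ} (A : ℕ → Matrix (Fin r) (Fin r) ℤ)

theorem prodA_mul_prodA {a b c : ℕ} (hab : a ≤ b) (hbc : b ≤ c) :
    prodA A a b * prodA A b c = prodA A a c := by
  obtain ⟨d, rfl⟩ := Nat.exists_eq_add_of_le hab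
  obtain ⟨e, rfl⟩ := Nat.exists_eq_add_of_le hbc
  simp only [prodA, ← List.prod_append, ← List.map_append, Nat.add_sub_cancel_left,
    Nat.add_assoc, Nat.add_sub_add_left, List.range'_append_1]

theorem dyadic_le_left (j k : ℕ) : 2 * j * 2 ^ k ≤ (2 * j + 1) * 2 ^ k :=
  Nat.mul_le_mul_right _ (Nat.le_succ _)

theorem dyadic_le_right (j k : ℕ) : (2 * j + 1) * 2 ^ k ≤ (2 * j + 1 + 1) * 2 ^ k :=
  Nat.mul_le_mul_right _ (Nat.le_succ _)

theorem mul_two_pow_succ (j k : ℕ) : j * 2 ^ (k + 1) = 2 * j * 2 ^ k := by ring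

theorem succ_mul_two_pow_succ (j k : ℕ) : (j + 1) * 2 ^ (k + 1) = (2 * j + 1 + 1) * 2 ^ k := by
  ring

theorem prod_Ico_dyadic_split {M : Type*} [CommMonoid M] (f : ℕ → M) (j k : ℕ) :
    ∏ u ∈ Ico (j * 2 ^ (k + 1)) ((j + 1) * 2 ^ (k + 1)), f u =
      (∏ u ∈ Ico (2 * j * 2 ^ k) ((2 * j + 1) * 2 ^ k), f u) *
        ∏ u ∈ Ico ((2 * j + 1) * 2 ^ k) ((2 * j + 1 + 1) * 2 ^ k), f u := by
  rw [mul_two_pow_succ, succ_mul_two_pow_succ,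
    prod_Ico_consecutive f (dyadic_le_left j k) (dyadic_le_right j k)]

theorem prodA_dyadic_split (j k : ℕ) :
    prodA A (j * 2 ^ (k + 1)) ((j + 1) * 2 ^ (k + 1)) =
      prodA A (2 * j * 2 ^ k) ((2 * j + 1) * 2 ^ k) *
        prodA A ((2 * j + 1) * 2 ^ k) ((2 * j + 1 + 1) * 2 ^ k) := by
  rw [mul_two_pow_succ, succ_mul_two_pow_succ,
    prodA_mul_prodA A (dyadic_le_left j k) (dyadic_le_right j k)]

end Dyadic

section Reduction

variable {r : ℕ} {M M' : ℕ}

theorem vmod_vmod_of_dvd (w : Fin r → ℤ) (h : M' ∣ M) : vmod (vmod w M) M' = vmod w M' :=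
  funext fun _ => Int.emod_emod_of_dvd _ (Int.natCast_dvd_natCast.mpr h)

theorem vmod_vecMul_vmod_of_dvd (w : Fin r → ℤ) (B : Matrix (Fin r) (Fin r) ℤ) (h : M' ∣ M) :
    vmod (vecMul (vmod w M) B) M' = vmod (vecMul w B) M' := by
  funext i
  simp only [vmod, vecMul, dotProduct]
  refine Int.ModEq.eq (Int.ModEq.sum fun k _ => ?_)
  exact ((Int.mod_modEq _ _).of_dvd (Int.natCast_dvd_natCast.mpr h)).mul_right _

end Reduction

theorem remainderTree_correct_general (ℓ r : ℕ) (A : ℕ → Matrix (Fin r) (Fin r) ℤ)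
    (m : ℕ → ℕ) (V : Fin r → ℤ) :
    let mnode : ℕ → ℕ → ℕ :=
      fun i j => ∏ u ∈ Finset.Ico (j * 2 ^ (ℓ - i)) ((j + 1) * 2 ^ (ℓ - i)), m u
    let Anode : ℕ → ℕ → Matrix (Fin r) (Fin r) ℤ :=
      fun i j => prodA A (j * 2 ^ (ℓ - i)) ((j + 1) * 2 ^ (ℓ - i))
    let Cnode : ℕ → ℕ → (Fin r → ℤ) :=
      fun i j => vmod (Matrix.vecMul V (prodA A 0 (j * 2 ^ (ℓ - i)))) (mnode i j)
    (∀ i < ℓ, ∀ j < 2 ^ i,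
        mnode i j = mnode (i + 1) (2 * j) * mnode (i + 1) (2 * j + 1)
        ∧ Anode i j = Anode (i + 1) (2 * j) * Anode (i + 1) (2 * j + 1))
    ∧ (∀ i < ℓ, ∀ j < 2 ^ (i + 1),
        Cnode (i + 1) j =
          if j % 2 = 0 then vmod (Cnode i (j / 2)) (mnode (i + 1) j)
          else vmod (Matrix.vecMul (Cnode i (j / 2)) (Anode (i + 1) (j - 1)))
            (mnode (i + 1) j))
    ∧ (∀ j < 2 ^ ℓ, Cnode ℓ j = vmod (Matrix.vecMul V (prodA A 0 j)) (m j)) := by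
  intro mnode Anode Cnode
  have level : ∀ i < ℓ, ℓ - i = ℓ - (i + 1) + 1 := fun i hi => by omega
  have split_m : ∀ i < ℓ, ∀ j, mnode i j = mnode (i + 1) (2 * j) * mnode (i + 1) (2 * j + 1) :=
    fun i hi j => by simp only [mnode, level i hi, prod_Ico_dyadic_split]
  refine ⟨fun i hi j _ => ⟨split_m i hi j, by simp only [Anode, level i hi, prodA_dyadic_split]⟩,
    fun i hi j _ => ?_, fun j _ => by simp [Cnode, mnode]⟩
  obtain ⟨t, rfl | rfl⟩ := Nat.even_or_odd' j
  · have hdvd : mnode (i + 1) (2 * t) ∣ mnode i t := Dvd.intro _ (split_m i hi t).symm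
    rw [if_pos (by omega), Nat.mul_div_cancel_left t two_pos]
    simp only [Cnode, vmod_vmod_of_dvd _ hdvd, level i hi, mul_two_pow_succ]
  · have hdvd : mnode (i + 1) (2 * t + 1) ∣ mnode i t := Dvd.intro_left _ (split_m i hi t).symm
    rw [if_neg (by omega), show (2 * t + 1) / 2 = t by omega, Nat.add_sub_cancel]
    simp only [Cnode, Anode, vmod_vecMul_vmod_of_dvd _ _ hdvd, vecMul_vecMul, level i hi,
      mul_two_pow_succ, prodA_mul_prodA A (Nat.zero_le _) (dyadic_le_left t _)]

/-- Correctness of the accumulating remainder tree: the product-tree recursions for the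
moduli tree m_{i,j} and matrix tree A_{i,j} hold, the top-down recursion for C_{i,j} holds,
and the leaves satisfy C_j = V·A₀⋯A_{j-1} mod m_j. -/
theorem remainderTree_correct (ℓ r : ℕ) (A : ℕ → Matrix (Fin r) (Fin r) ℤ)
    (m : ℕ → ℕ) (V : Fin r → ℤ) (hm0 : m 0 = 1) (hmpos : ∀ u, 0 < m u)
    (hAlast : A (2 ^ ℓ - 1) = 1) :
    let mnode : ℕ → ℕ → ℕ :=
      fun i j => ∏ u ∈ Finset.Ico (j * 2 ^ (ℓ - i)) ((j + 1) * 2 ^ (ℓ - i)), m u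
    let Anode : ℕ → ℕ → Matrix (Fin r) (Fin r) ℤ :=
      fun i j => prodA A (j * 2 ^ (ℓ - i)) ((j + 1) * 2 ^ (ℓ - i))
    let Cnode : ℕ → ℕ → (Fin r → ℤ) :=
      fun i j => vmod (Matrix.vecMul V (prodA A 0 (j * 2 ^ (ℓ - i)))) (mnode i j)
    (∀ i < ℓ, ∀ j < 2 ^ i,
        mnode i j = mnode (i + 1) (2 * j) * mnode (i + 1) (2 * j + 1)
        ∧ Anode i j = Anode (i + 1) (2 * j) * Anode (i + 1) (2 * j + 1))
    ∧ (∀ i < ℓ, ∀ j < 2 ^ (i + 1),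
        Cnode (i + 1) j =
          if j % 2 = 0 then vmod (Cnode i (j / 2)) (mnode (i + 1) j)
          else vmod (Matrix.vecMul (Cnode i (j / 2)) (Anode (i + 1) (j - 1)))
            (mnode (i + 1) j))
    ∧ (∀ j < 2 ^ ℓ, Cnode ℓ j = vmod (Matrix.vecMul V (prodA A 0 j)) (m j)) :=
  remainderTree_correct_general ℓ r A m V
end

section
/- Let f = f_4 x⁴ + f_3 x³ + f_2 x² + f_1 x + f_0 over a field of characteristic 0 with f_0 f_4 ≠ 0. Then for every n ≥ 1, 2(2n+1) f_0² f^n_{2n+2} = -(2n+3) f_1 f_4 f^n_{2n-3} + (2(2n+1) f_0 f_4 - (n+2) f_1 f_3) f^n_{2n-2} + ((2n+1) f_0 f_3 - f_1 f_2) f^n_{2n-1} + n f_1² f^n_{2n}, where f^n_k is the coefficient of x^k in f^n. -/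
open Polynomial Finset

lemma coeffZ_eq {F : Type*} [Semiring F] (g : Polynomial F) {i : ℤ} {t : ℕ}
    (h : i = (t : ℤ)) : coeffZ g i = g.coeff t := by
  subst h; simp [coeffZ]

lemma quartic_helper {F : Type*} [CommRing F] (a b c d e : F) (q : Polynomial F) (m : ℕ) :
    ((C e * X ^ 4 + C d * X ^ 3 + C c * X ^ 2 + C b * X + C a) * q).coeff (m + 4)
    = a * q.coeff (m + 4) + b * q.coeff (m + 3) + c * q.coeff (m + 2)
      + d * q.coeff (m + 1) + e * q.coeff m := by
  have e4 : (C e * X ^ 4 * q).coeff (m + 4) = e * q.coeff m := by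
    rw [show C e * X ^ 4 * q = X ^ 4 * (C e * q) by ring, coeff_X_pow_mul, coeff_C_mul]
  have e3 : (C d * X ^ 3 * q).coeff (m + 4) = d * q.coeff (m + 1) := by
    rw [show C d * X ^ 3 * q = X ^ 3 * (C d * q) by ring,
      show m + 4 = m + 1 + 3 by omega, coeff_X_pow_mul, coeff_C_mul]
  have e2 : (C c * X ^ 2 * q).coeff (m + 4) = c * q.coeff (m + 2) := by
    rw [show C c * X ^ 2 * q = X ^ 2 * (C c * q) by ring,
      show m + 4 = m + 2 + 2 by omega, coeff_X_pow_mul, coeff_C_mul]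
  have e1 : (C b * X * q).coeff (m + 4) = b * q.coeff (m + 3) := by
    rw [show C b * X * q = X ^ 1 * (C b * q) by ring,
      show m + 4 = m + 3 + 1 by omega, coeff_X_pow_mul, coeff_C_mul]
  have e0 : (C a * q).coeff (m + 4) = a * q.coeff (m + 4) := coeff_C_mul _
  simp only [add_mul, coeff_add, e4, e3, e2, e1, e0]
  ring

lemma quartic_key {F : Type*} [Field F] [CharZero F] (f0 f1 f2 f3 f4 : F) (f : Polynomial F)
    (hf : f = C f4 * X ^ 4 + C f3 * X ^ 3 + C f2 * X ^ 2 + C f1 * X + C f0)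
    (n : ℕ) (hn : 1 ≤ n) (m : ℕ) :
    ((m : F) + 5) * f0 * (f ^ n).coeff (m + 5) =
      ((n : F) + 1 - ((m : F) + 5)) * f1 * (f ^ n).coeff (m + 4)
      + (2 * ((n : F) + 1) - ((m : F) + 5)) * f2 * (f ^ n).coeff (m + 3)
      + (3 * ((n : F) + 1) - ((m : F) + 5)) * f3 * (f ^ n).coeff (m + 2)
      + (4 * ((n : F) + 1) - ((m : F) + 5)) * f4 * (f ^ n).coeff (m + 1) := by
  obtain ⟨q, rfl⟩ : ∃ q, n = q + 1 := ⟨n - 1, by omega⟩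
  have H : f * derivative (f ^ (q + 1)) = C ((q : F) + 1) * derivative f * f ^ (q + 1) := by
    rw [derivative_pow]
    simp only [Nat.add_sub_cancel]
    push_cast
    rw [pow_succ]
    ring
  have H4 : C ((q : F) + 1) * derivative f =
      C 0 * X ^ 4 + C (((q : F) + 1) * (4 * f4)) * X ^ 3
      + C (((q : F) + 1) * (3 * f3)) * X ^ 2 + C (((q : F) + 1) * (2 * f2)) * X
      + C (((q : F) + 1) * f1) := by
    rw [hf]
    simp only [derivative_add, derivative_mul, derivative_C, derivative_X_pow, derivative_X,
      map_mul, map_add, map_ofNat, map_one, C_0]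
    push_cast
    simp only [map_ofNat]
    ring
  have hc := congrArg (fun p => p.coeff (m + 4)) H
  rw [H4] at hc
  rw [hf] at hc
  simp only [quartic_helper] at hc
  simp only [coeff_derivative] at hc
  rw [← hf] at hc
  simp only [show m + 4 + 1 = m + 5 by omega, show m + 3 + 1 = m + 4 by omega,
    show m + 2 + 1 = m + 3 by omega, show m + 1 + 1 = m + 2 by omega] at hc
  push_cast at hc
  push_cast
  linear_combination hc

/-- Quartic model, rightward extension: explicit formula for 2(2n+1)f₀² fⁿ_{2n+2}
in terms of fⁿ_{2n-3}, …, fⁿ_{2n}. -/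
theorem quartic_right_extension {F : Type*} [Field F] [CharZero F]
    (f0 f1 f2 f3 f4 : F) (h : f0 * f4 ≠ 0) (f : Polynomial F)
    (hf : f = C f4 * X ^ 4 + C f3 * X ^ 3 + C f2 * X ^ 2 + C f1 * X + C f0)
    (n : ℕ) (hn : 1 ≤ n) :
    2 * (2 * (n : F) + 1) * f0 ^ 2 * coeffZ (f ^ n) (2 * (n : ℤ) + 2) =
      -(2 * (n : F) + 3) * f1 * f4 * coeffZ (f ^ n) (2 * (n : ℤ) - 3)
      + (2 * (2 * (n : F) + 1) * f0 * f4 - ((n : F) + 2) * f1 * f3) *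
          coeffZ (f ^ n) (2 * (n : ℤ) - 2)
      + ((2 * (n : F) + 1) * f0 * f3 - f1 * f2) * coeffZ (f ^ n) (2 * (n : ℤ) - 1)
      + (n : F) * f1 ^ 2 * coeffZ (f ^ n) (2 * (n : ℤ)) := by
  rcases eq_or_lt_of_le hn with h1 | h2
  · -- n = 1
    subst hf
    rw [← h1]
    norm_num [coeffZ]
    norm_num [show Int.toNat 4 = 4 from rfl, show Int.toNat 2 = 2 from rfl, coeff_X, coeff_C]
    ring
  · -- n ≥ 2
    obtain ⟨p, rfl⟩ : ∃ p, n = p + 2 := ⟨n - 2, by omega⟩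
    have E1 := quartic_key f0 f1 f2 f3 f4 f hf (p + 2) (by omega) (2 * p)
    have E2 := quartic_key f0 f1 f2 f3 f4 f hf (p + 2) (by omega) (2 * p + 1)
    simp only [show 2 * p + 1 + 5 = 2 * p + 6 by omega, show 2 * p + 1 + 4 = 2 * p + 5 by omega,
      show 2 * p + 1 + 3 = 2 * p + 4 by omega, show 2 * p + 1 + 2 = 2 * p + 3 by omega,
      show 2 * p + 1 + 1 = 2 * p + 2 by omega] at E2
    rw [coeffZ_eq (f ^ (p + 2)) (show 2 * ((p + 2 : ℕ) : ℤ) + 2 = ((2 * p + 6 : ℕ) : ℤ) by push_cast; ring),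
      coeffZ_eq (f ^ (p + 2)) (show 2 * ((p + 2 : ℕ) : ℤ) - 3 = ((2 * p + 1 : ℕ) : ℤ) by push_cast; ring),
      coeffZ_eq (f ^ (p + 2)) (show 2 * ((p + 2 : ℕ) : ℤ) - 2 = ((2 * p + 2 : ℕ) : ℤ) by push_cast; ring),
      coeffZ_eq (f ^ (p + 2)) (show 2 * ((p + 2 : ℕ) : ℤ) - 1 = ((2 * p + 3 : ℕ) : ℤ) by push_cast; ring),
      coeffZ_eq (f ^ (p + 2)) (show 2 * ((p + 2 : ℕ) : ℤ) = ((2 * p + 4 : ℕ) : ℤ) by push_cast; ring)]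
    have hne : ((p : F) + 3) ≠ 0 := by
      have : ((p + 3 : ℕ) : F) ≠ 0 := Nat.cast_ne_zero.mpr (by omega)
      push_cast at this
      exact this
    apply mul_left_cancel₀ hne
    push_cast at E1 E2 ⊢
    linear_combination (2 * (p : F) + 5) * f0 * E2 - ((p : F) + 3) * f1 * E1
end

section
/- Let f = f_4 x⁴ + f_3 x³ + f_2 x² + f_1 x + f_0 over a field of characteristic 0 with f_0 f_4 ≠ 0. Then for every n ≥ 3, (2n+5)(2n+4) f_4² f^n_{2n-5} = ((n+3)(n+4) f_3² - 3(2n+4) f_2 f_4) f^n_{2n-3} + (2(n+4) f_2 f_3 + (n-2)(2n+4) f_1 f_4) f^n_{2n-2} + (-(n-1)(n+4) f_1 f_3 + (2n-1)(2n+4) f_0 f_4) f^n_{2n-1} - 2n(n+4) f_0 f_3 f^n_{2n}. -/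
/-!
Write `c k` for the coefficient of `X ^ k` in `f ^ n`, zero for `k < 0`. The identity
`f * (X * (f ^ n)') = n * (X * f') * f ^ n`, read off coefficientwise (multiplying by `X` makes
the coefficient of `X * p'` at `k` equal to `k * p_k`, so no index shift occurs), is a linear
recurrence between `c (k - 4), …, c k` with coefficients linear in `k` and `n`. Its instances at
`k = 2n - 1` and `k = 2n`, combined so that `c (2n - 4)` cancels, give the formula.
-/

open Polynomial Finset

section CoeffZ

variable {R : Type*} [CommRing R]

lemma coeffZ_add (p q : R[X]) (k : ℤ) : coeffZ (p + q) k = coeffZ p k + coeffZ q k := by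
  unfold coeffZ
  split_ifs <;> simp

lemma coeffZ_C_mul (a : R) (q : R[X]) (k : ℤ) : coeffZ (C a * q) k = a * coeffZ q k := by
  unfold coeffZ
  split_ifs <;> simp

lemma coeffZ_C_mul_X_pow_mul (a : R) (i : ℕ) (q : R[X]) (k : ℤ) :
    coeffZ (C a * X ^ i * q) k = a * coeffZ q (k - i) := by
  unfold coeffZ
  rw [mul_assoc, coeff_C_mul, coeff_X_pow_mul']
  split_ifs <;> first | omega | simp

lemma coeffZ_X_mul_derivative (p : R[X]) (k : ℤ) :
    coeffZ (X * derivative p) k = k * coeffZ p k := by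
  unfold coeffZ
  split_ifs with hk
  · obtain ⟨j, rfl⟩ := Int.eq_ofNat_of_zero_le hk
    cases j with
    | zero => simp
    | succ j => simp [coeff_X_mul, coeff_derivative, mul_comm]
  · simp

lemma coeffZ_quartic_mul (a₀ a₁ a₂ a₃ a₄ : R) (q : R[X]) (k : ℤ) :
    coeffZ ((C a₄ * X ^ 4 + C a₃ * X ^ 3 + C a₂ * X ^ 2 + C a₁ * X + C a₀) * q) k =
      a₄ * coeffZ q (k - 4) + a₃ * coeffZ q (k - 3) + a₂ * coeffZ q (k - 2)
        + a₁ * coeffZ q (k - 1) + a₀ * coeffZ q k := by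
  have hX : (C a₁ * X + C a₀ : R[X]) = C a₁ * X ^ 1 + C a₀ * X ^ 0 := by ring
  rw [add_assoc _ (C a₁ * X), hX]
  simp only [add_mul, coeffZ_add, coeffZ_C_mul_X_pow_mul]
  simp only [Nat.cast_ofNat, Nat.cast_one, Nat.cast_zero, sub_zero, add_assoc]

lemma mul_X_derivative_pow (f : R[X]) (n : ℕ) :
    f * (X * derivative (f ^ n)) = C (n : R) * (X * derivative f * f ^ n) := by
  cases n with
  | zero => simp
  | succ n => rw [derivative_pow_succ, pow_succ _ n]; push_cast; ring

lemma coeffZ_pow_recurrence_of_quartic {f : R[X]} {f₀ f₁ f₂ f₃ f₄ : R}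
    (hf : f = C f₄ * X ^ 4 + C f₃ * X ^ 3 + C f₂ * X ^ 2 + C f₁ * X + C f₀) (n : ℕ) (k : ℤ) :
    f₄ * ((k - 4) * coeffZ (f ^ n) (k - 4)) + f₃ * ((k - 3) * coeffZ (f ^ n) (k - 3))
        + f₂ * ((k - 2) * coeffZ (f ^ n) (k - 2)) + f₁ * ((k - 1) * coeffZ (f ^ n) (k - 1))
        + f₀ * (k * coeffZ (f ^ n) k) =
      n * (4 * f₄ * coeffZ (f ^ n) (k - 4) + 3 * f₃ * coeffZ (f ^ n) (k - 3)
        + 2 * f₂ * coeffZ (f ^ n) (k - 2) + f₁ * coeffZ (f ^ n) (k - 1)) := by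
  have hXf : X * derivative f =
      C (4 * f₄) * X ^ 4 + C (3 * f₃) * X ^ 3 + C (2 * f₂) * X ^ 2 + C f₁ * X + C 0 := by
    rw [hf]
    simp only [derivative_add, derivative_C_mul_X_pow, derivative_C_mul_X, derivative_C,
      map_mul, Nat.cast_ofNat, map_ofNat, map_zero]
    ring
  have key := mul_X_derivative_pow f n
  rw [hXf, mul_left_comm (C (n : R))] at key
  nth_rw 1 [hf] at key
  have hk := congrArg (coeffZ · k) key
  simp only [coeffZ_quartic_mul, coeffZ_X_mul_derivative, coeffZ_C_mul] at hk
  push_cast at hk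
  linear_combination hk

end CoeffZ

theorem quartic_left_extension_general {F : Type*} [Field F]
    (f0 f1 f2 f3 f4 : F) (f : Polynomial F)
    (hf : f = C f4 * X ^ 4 + C f3 * X ^ 3 + C f2 * X ^ 2 + C f1 * X + C f0)
    (n : ℕ) :
    (2 * (n : F) + 5) * (2 * (n : F) + 4) * f4 ^ 2 * coeffZ (f ^ n) (2 * (n : ℤ) - 5) =
      (((n : F) + 3) * ((n : F) + 4) * f3 ^ 2 - 3 * (2 * (n : F) + 4) * f2 * f4) *
          coeffZ (f ^ n) (2 * (n : ℤ) - 3)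
      + (2 * ((n : F) + 4) * f2 * f3 + ((n : F) - 2) * (2 * (n : F) + 4) * f1 * f4) *
          coeffZ (f ^ n) (2 * (n : ℤ) - 2)
      + (-(((n : F) - 1) * ((n : F) + 4)) * f1 * f3
            + (2 * (n : F) - 1) * (2 * (n : F) + 4) * f0 * f4) *
          coeffZ (f ^ n) (2 * (n : ℤ) - 1)
      - 2 * (n : F) * ((n : F) + 4) * f0 * f3 * coeffZ (f ^ n) (2 * (n : ℤ)) := by
  have hA := coeffZ_pow_recurrence_of_quartic hf n (2 * n - 1)
  have hB := coeffZ_pow_recurrence_of_quartic hf n (2 * n)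
  rw [show (2 * n - 1 : ℤ) - 4 = 2 * n - 5 by ring, show (2 * n - 1 : ℤ) - 3 = 2 * n - 4 by ring,
    show (2 * n - 1 : ℤ) - 2 = 2 * n - 3 by ring, show (2 * n - 1 : ℤ) - 1 = 2 * n - 2 by ring] at hA
  push_cast at hA hB
  linear_combination (-(2 * (n : F) + 4) * f4) * hA + ((n : F) + 4) * f3 * hB

/-- Quartic model, leftward extension: explicit formula for (2n+5)(2n+4)f₄² fⁿ_{2n-5}
in terms of fⁿ_{2n-3}, …, fⁿ_{2n}. -/
theorem quartic_left_extension {F : Type*} [Field F] [CharZero F]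
    (f0 f1 f2 f3 f4 : F) (h : f0 * f4 ≠ 0) (f : Polynomial F)
    (hf : f = C f4 * X ^ 4 + C f3 * X ^ 3 + C f2 * X ^ 2 + C f1 * X + C f0)
    (n : ℕ) (hn : 3 ≤ n) :
    (2 * (n : F) + 5) * (2 * (n : F) + 4) * f4 ^ 2 * coeffZ (f ^ n) (2 * (n : ℤ) - 5) =
      (((n : F) + 3) * ((n : F) + 4) * f3 ^ 2 - 3 * (2 * (n : F) + 4) * f2 * f4) *
          coeffZ (f ^ n) (2 * (n : ℤ) - 3)
      + (2 * ((n : F) + 4) * f2 * f3 + ((n : F) - 2) * (2 * (n : F) + 4) * f1 * f4) *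
          coeffZ (f ^ n) (2 * (n : ℤ) - 2)
      + (-(((n : F) - 1) * ((n : F) + 4)) * f1 * f3
            + (2 * (n : F) - 1) * (2 * (n : F) + 4) * f0 * f4) *
          coeffZ (f ^ n) (2 * (n : ℤ) - 1)
      - 2 * (n : F) * ((n : F) + 4) * f0 * f3 * coeffZ (f ^ n) (2 * (n : ℤ)) :=
  quartic_left_extension_general f0 f1 f2 f3 f4 f hf n
end

section
/- For b = 2^ℓ, positive moduli m_0,…,m_{b-1}, and integers D_0,…,D_{b-1}, the accumulating remainder tree applied to the 1×1 matrices [D_j] with initial value 1 computes c_j = D_0 D_1 ⋯ D_{j-1} mod m_j for all 0 ≤ j < b. In particular, taking D_j = (2j+1)(2j+2), m_j = 2j+1 when 2j+1 is prime and m_j = 1 otherwise, one obtains (p-1)! mod p for every odd prime p = 2j+1 < 2b; by Wilson's theorem each such output equals p - 1. -/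
open Finset

/-- The accumulating remainder tree for 1×1 matrices [D_j] with initial value 1 computes
c_j = D₀⋯D_{j-1} mod m_j: the top-down recursion holds and the leaves give the reduced
partial products.  Taking D_j = (2j+1)(2j+2) (so D₀⋯D_{j-1} = (2j)!) and m_j = 2j+1 when
2j+1 is prime (1 otherwise), one obtains (p-1)! mod p for every odd prime p = 2j+1 < 2b,
which equals p - 1 by Wilson's theorem. -/
theorem remainderTree_scalar_wilson (ℓ : ℕ) :
    (∀ (D : ℕ → ℤ) (m : ℕ → ℕ), (∀ u, 0 < m u) →
      let mnode : ℕ → ℕ → ℕ :=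
        fun i j => ∏ u ∈ Finset.Ico (j * 2 ^ (ℓ - i)) ((j + 1) * 2 ^ (ℓ - i)), m u
      let cnode : ℕ → ℕ → ℤ :=
        fun i j => (∏ u ∈ Finset.range (j * 2 ^ (ℓ - i)), D u) % (mnode i j : ℤ)
      (∀ i < ℓ, ∀ j < 2 ^ (i + 1),
          cnode (i + 1) j =
            if j % 2 = 0 then cnode i (j / 2) % (mnode (i + 1) j : ℤ)
            else (cnode i (j / 2) *
                ∏ u ∈ Finset.Ico ((j - 1) * 2 ^ (ℓ - (i + 1))) (j * 2 ^ (ℓ - (i + 1))), D u)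
              % (mnode (i + 1) j : ℤ))
      ∧ (∀ j < 2 ^ ℓ, cnode ℓ j = (∏ u ∈ Finset.range j, D u) % (m j : ℤ)))
    ∧ (∀ j : ℕ, (∏ u ∈ Finset.range j, ((2 * u + 1) * (2 * u + 2) : ℤ))
        = ((2 * j).factorial : ℤ))
    ∧ (∀ j < 2 ^ ℓ, (2 * j + 1).Prime →
        (∏ u ∈ Finset.range j, ((2 * u + 1) * (2 * u + 2) : ℤ)) % ((2 * j + 1 : ℕ) : ℤ)
          = (2 * j : ℤ)) := by
  have hfac : ∀ j : ℕ, (∏ u ∈ Finset.range j, ((2 * u + 1) * (2 * u + 2) : ℤ))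
      = ((2 * j).factorial : ℤ) := by
    intro j
    induction j with
    | zero => simp
    | succ n ih =>
      rw [Finset.prod_range_succ, ih]
      have : 2 * (n + 1) = (2 * n + 1) + 1 := by ring
      rw [this]
      rw [Nat.factorial_succ, Nat.factorial_succ]
      push_cast
      ring
  refine ⟨?_, hfac, ?_⟩
  · intro D m hm mnode cnode
    constructor
    · intro i hi j hj
      have he : ℓ - i = (ℓ - (i + 1)) + 1 := by omega
      set e := ℓ - (i + 1) with hedef
      -- divisibility: mnode (i+1) j ∣ mnode i (j/2), cast to ℤ
      have hsub : Finset.Ico (j * 2 ^ e) ((j + 1) * 2 ^ e) ⊆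
          Finset.Ico (j / 2 * 2 ^ (ℓ - i)) ((j / 2 + 1) * 2 ^ (ℓ - i)) := by
        apply Finset.Ico_subset_Ico
        · rw [he, pow_succ]
          have : j / 2 * (2 ^ e * 2) = (2 * (j / 2)) * 2 ^ e := by ring
          rw [this]
          exact Nat.mul_le_mul_right _ (by omega)
        · rw [he, pow_succ]
          have : (j / 2 + 1) * (2 ^ e * 2) = (2 * (j / 2) + 2) * 2 ^ e := by ring
          rw [this]
          exact Nat.mul_le_mul_right _ (by omega)
      have hdvd : (mnode (i + 1) j : ℤ) ∣ (mnode i (j / 2) : ℤ) := by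
        exact_mod_cast Int.natCast_dvd_natCast.mpr
          (Finset.prod_dvd_prod_of_subset _ _ m hsub)
      rcases Nat.even_or_odd j with ⟨k, hk⟩ | ⟨k, hk⟩
      · -- j = 2k
        subst hk
        have h2 : (k + k) % 2 = 0 := by omega
        have hd2 : (k + k) / 2 = k := by omega
        simp only [h2, if_true, hd2, cnode]
        rw [hd2] at hdvd
        rw [Int.emod_emod_of_dvd _ hdvd]
        have : (k + k) * 2 ^ e = k * 2 ^ (ℓ - i) := by
          rw [he, pow_succ]; ring
        rw [this]
      · -- j = 2k+1
        subst hk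
        have h2 : (2 * k + 1) % 2 = 1 := by omega
        have hd2 : (2 * k + 1) / 2 = k := by omega
        simp only [h2, hd2, cnode]
        norm_num
        have hAB : (∏ u ∈ Finset.range (k * 2 ^ (ℓ - i)), D u) *
            (∏ u ∈ Finset.Ico ((2 * k + 1 - 1) * 2 ^ e) ((2 * k + 1) * 2 ^ e), D u)
            = ∏ u ∈ Finset.range ((2 * k + 1) * 2 ^ e), D u := by
          have h1 : k * 2 ^ (ℓ - i) = (2 * k + 1 - 1) * 2 ^ e := by
            have h0 : 2 * k + 1 - 1 = 2 * k := rfl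
            rw [h0, he, pow_succ]; ring
          rw [h1]
          exact Finset.prod_range_mul_prod_Ico D (Nat.mul_le_mul_right _ (by omega))
        have hkd2 : (2 * k + 1) / 2 = k := hd2
        have hdvd' : (mnode (i + 1) (2 * k + 1) : ℤ) ∣ (mnode i k : ℤ) := by
          simpa [hkd2] using hdvd
        set M := (mnode (i + 1) (2 * k + 1) : ℤ)
        set A := ∏ u ∈ Finset.range (k * 2 ^ (ℓ - i)), D u
        set B := ∏ u ∈ Finset.Ico ((2 * k + 1 - 1) * 2 ^ e) ((2 * k + 1) * 2 ^ e), D u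
        calc (∏ u ∈ Finset.range ((2 * k + 1) * 2 ^ e), D u) % M
            = (A * B) % M := by rw [hAB]
          _ = (A % (mnode i k : ℤ) * B) % M := by
              rw [Int.mul_emod, Int.mul_emod (A % (mnode i k : ℤ)),
                Int.emod_emod_of_dvd _ hdvd']
    · intro j hj
      have : ℓ - ℓ = 0 := by omega
      simp only [cnode, mnode, this, pow_zero, mul_one, 
        Nat.Ico_succ_singleton,
        Finset.prod_singleton]
  · intro j hj hp
    rw [hfac j]
    haveI : Fact (Nat.Prime (2 * j + 1)) := ⟨hp⟩
    have hw : (((2 * j).factorial : ℤ) : ZMod (2 * j + 1)) = ((2 * j : ℤ) : ZMod (2 * j + 1)) := by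
      push_cast
      have := ZMod.wilsons_lemma (2 * j + 1)
      simp only [Nat.add_sub_cancel] at this
      rw [this]
      have : ((2 * j + 1 : ℕ) : ZMod (2 * j + 1)) = 0 := by
        exact_mod_cast ZMod.natCast_self (2 * j + 1)
      push_cast at this
      linear_combination -this
    have hmod := (ZMod.intCast_eq_intCast_iff _ _ _).mp hw
    rw [Int.ModEq] at hmod
    rw [hmod, Int.emod_eq_of_lt (by positivity) (by push_cast; omega)]
end
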